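/- arXiv:2412.11522 — 3 statements merged into one kernel-verified Lean document; each statement's English description precedes it below -/
import Mathlib

section
/- Let α ∈ ℂ with α ∉ ℝ. Then G is block Hankel if and only if for all λ, ω ∈ ℂ one has (λ − \bar{α})(\bar{ω} − α)·F(λ) N_α F(ω)* = (λ − α)(\bar{ω} − \bar{α})·F(λ) N_{\bar{α}} F(ω)*. -/
open Matrix Complex
open scoped ComplexConjugate ComplexOrder

noncomputable section

/-- Index type for `ℂ^m` with `m = (n+1)p`, viewed as `n+1` blocks of size `p`. -/
abbrev Idx (n p : ℕ) : Type := Fin (n + 1) × Fin p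

/-- The `p × m` matrix polynomial `F(λ) = [I_p, λI_p, …, λ^n I_p]`. -/
def Fm (n p : ℕ) (lam : ℂ) : Matrix (Fin p) (Idx n p) ℂ :=
  Matrix.of fun i jk => lam ^ (jk.1 : ℕ) * (if jk.2 = i then 1 else 0)

/-- The `m × p` matrix `e_k` whose `k`-th block is `I_p` and other blocks are `0`. -/
def Ek (n p : ℕ) (k : Fin (n + 1)) : Matrix (Idx n p) (Fin p) ℂ :=
  Matrix.of fun jl i => if jl.1 = k ∧ jl.2 = i then 1 else 0

/-- The nilpotent block shift matrix `A` with blocks `A_{ij} = I_p` iff `j = i+1`. -/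
def Am (n p : ℕ) : Matrix (Idx n p) (Idx n p) ℂ :=
  Matrix.of fun ia jb => if (jb.1 : ℕ) = (ia.1 : ℕ) + 1 ∧ ia.2 = jb.2 then 1 else 0

/-- `N_α = Γ − ΓF(α)*(F(α)ΓF(α)*)⁻¹F(α)Γ` where `Γ = G⁻¹`. -/
def Nm (n p : ℕ) (G : Matrix (Idx n p) (Idx n p) ℂ) (α : ℂ) : Matrix (Idx n p) (Idx n p) ℂ :=
  G⁻¹ - G⁻¹ * (Fm n p α)ᴴ * (Fm n p α * G⁻¹ * (Fm n p α)ᴴ)⁻¹ * Fm n p α * G⁻¹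

/-- `G` is block Hankel: `g_{i+1,j} = g_{i,j+1}` for `0 ≤ i,j ≤ n−1`. -/
def BlockHankel (n p : ℕ) (G : Matrix (Idx n p) (Idx n p) ℂ) : Prop :=
  ∀ (i j : Fin n) (a b : Fin p),
    G (i.succ, a) (j.castSucc, b) = G (i.castSucc, a) (j.succ, b)

/-!
Let `C_b` be multiplication by `λ - b` from polynomials of degree `< n` to degree `≤ n` (with
coefficients in `ℂ^p`). Its range is the kernel of `F(b)`, so
`N_b = C_b H_b⁻¹ C_b*` with `H_b = C_b* G C_b`, and therefore
`F(λ) N_b F(ω)* = (λ - b)(ω̄ - b̄) F'(λ) H_b⁻¹ F'(ω)*`, where `F'` is `F` of degree `n - 1`.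
After cancelling the common factor `(λ - α)(λ - ᾱ)(ω̄ - α)(ω̄ - ᾱ)`, the identity becomes
`H_α⁻¹ = H_ᾱ⁻¹` by comparing coefficients. Blockwise
`H_b = G₁₁ - b G₁₀ - b̄ G₀₁ + |b|² G₀₀` with `G₁₀ = (g_{i+1,j})`, `G₀₁ = (g_{i,j+1})`, so
`H_α - H_ᾱ = (ᾱ - α)(G₁₀ - G₀₁)`, which vanishes iff `G` is block Hankel.
-/

namespace Matrix

theorem mul_one_submatrix_id {R m n l : Type*} [NonAssocSemiring R] [Fintype n] [DecidableEq n]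
    (M : Matrix m n R) (f : l → n) : M * (1 : Matrix n n R).submatrix id f = M.submatrix id f :=
  mul_submatrix_one (Equiv.refl n) f M

variable {R m k l : Type*} [CommRing R] [StarRing R]
  [Fintype m] [DecidableEq m] [Fintype k] [DecidableEq k] [Fintype l] [DecidableEq l]

/-- If the columns of `C` span the kernel of `F`, the compression `Γ - ΓF*(FΓF*)⁻¹FΓ` of
`Γ = G⁻¹` is `C (C*GC)⁻¹ C*`. -/
theorem inv_sub_eq_mul_inv_mul_conjTranspose {G : Matrix m m R} {F : Matrix k m R}
    {C : Matrix m l R} (D : Matrix l m R) (E : Matrix m k R) (hG : IsUnit G.det)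
    (hΔ : IsUnit (F * G⁻¹ * Fᴴ).det) (hH : IsUnit (Cᴴ * G * C).det) (hFC : F * C = 0)
    (hCD : C * D + E * F = 1) :
    G⁻¹ - G⁻¹ * Fᴴ * (F * G⁻¹ * Fᴴ)⁻¹ * F * G⁻¹ = C * (Cᴴ * G * C)⁻¹ * Cᴴ := by
  rw [← sub_eq_zero]
  set X := G⁻¹ - G⁻¹ * Fᴴ * (F * G⁻¹ * Fᴴ)⁻¹ * F * G⁻¹ - C * (Cᴴ * G * C)⁻¹ * Cᴴ
  have hCF : Cᴴ * Fᴴ = 0 := by rw [← conjTranspose_mul, hFC, conjTranspose_zero]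
  have hFX : F * X = 0 := by
    simp only [X, Matrix.mul_sub, ← Matrix.mul_assoc, mul_nonsing_inv _ hΔ, hFC,
      Matrix.zero_mul, Matrix.one_mul, sub_self]
  have hGX : Cᴴ * G * X = 0 := by
    simp only [X, Matrix.mul_sub, ← Matrix.mul_assoc, mul_nonsing_inv_cancel_right _ _ hG,
      mul_nonsing_inv _ hH, hCF, Matrix.zero_mul, Matrix.one_mul, sub_zero, sub_self]
  have hX : X = C * (D * X) := by
    rw [← Matrix.mul_assoc, ← add_zero (C * D * X), ← Matrix.mul_zero E, ← hFX,
      ← Matrix.mul_assoc, ← Matrix.add_mul, hCD, Matrix.one_mul]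
  have hDX : D * X = 0 := by
    have hHDX : Cᴴ * G * C * (D * X) = 0 := by rw [Matrix.mul_assoc _ C, ← hX, hGX]
    rw [← (Cᴴ * G * C).nonsing_inv_mul_cancel_left (D * X) hH, hHDX, Matrix.mul_zero]
  rw [hX, hDX, Matrix.mul_zero]

end Matrix

theorem eq_zero_of_forall_sum_mul_pow_eq_zero {N : ℕ} (f : Fin N → ℂ) {S : Set ℂ}
    (hS : S.Infinite) (h : ∀ z ∈ S, ∑ j : Fin N, f j * z ^ (j : ℕ) = 0) : f = 0 := by
  have hP : ∑ j : Fin N, Polynomial.C (f j) * Polynomial.X ^ (j : ℕ) = 0 :=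
    Polynomial.eq_zero_of_infinite_isRoot _ <| hS.mono fun z hz => by
      simpa [Polynomial.eval_finsetSum] using h z hz
  funext j
  simpa [Polynomial.finsetSum_coeff, Polynomial.coeff_X_pow, Fin.val_inj] using
    congrArg (Polynomial.coeff · j) hP

/-- Multiplication by `λ - b`, from `ℂ^p`-valued polynomials of degree `< n` to those of degree
`≤ n`, in the basis of monomials. -/
def mulSub (n p : ℕ) (b : ℂ) : Matrix (Idx n p) (Fin n × Fin p) ℂ :=
  (1 : Matrix (Idx n p) (Idx n p) ℂ).submatrix id (Prod.map Fin.succ id) -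
    b • (1 : Matrix (Idx n p) (Idx n p) ℂ).submatrix id (Prod.map Fin.castSucc id)

/-- Synthetic division by `λ - b`, discarding the remainder. -/
def divSub (n p : ℕ) (b : ℂ) : Matrix (Fin n × Fin p) (Idx n p) ℂ :=
  Matrix.of fun ja ic =>
    if (ja.1 : ℕ) < ic.1 ∧ ja.2 = ic.2 then b ^ ((ic.1 : ℕ) - ja.1 - 1) else 0

/-- `F(λ)` in degree `n - 1`. -/
def truncFm (n p : ℕ) (lam : ℂ) : Matrix (Fin p) (Fin n × Fin p) ℂ :=
  Matrix.of fun i jk => lam ^ (jk.1 : ℕ) * (if jk.2 = i then 1 else 0)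

def gramMulSub (n p : ℕ) (G : Matrix (Idx n p) (Idx n p) ℂ) (b : ℂ) :
    Matrix (Fin n × Fin p) (Fin n × Fin p) ℂ :=
  (mulSub n p b)ᴴ * G * mulSub n p b

section

variable {n p : ℕ}

theorem mul_mulSub {X : Type*} (M : Matrix X (Idx n p) ℂ) (b : ℂ) :
    M * mulSub n p b =
      M.submatrix id (Prod.map Fin.succ id) - b • M.submatrix id (Prod.map Fin.castSucc id) := by
  rw [mulSub, Matrix.mul_sub, Matrix.mul_smul, mul_one_submatrix_id, mul_one_submatrix_id]

theorem conjTranspose_mulSub_mul {X : Type*} (M : Matrix (Idx n p) X ℂ) (b : ℂ) :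
    (mulSub n p b)ᴴ * M =
      M.submatrix (Prod.map Fin.succ id) id -
        conj b • M.submatrix (Prod.map Fin.castSucc id) id := by
  rw [← conjTranspose_conjTranspose M, ← conjTranspose_mul, mul_mulSub]
  simp [conjTranspose_submatrix]

theorem divSub_mul_mulSub (b : ℂ) : divSub n p b * mulSub n p b = 1 := by
  ext ⟨j, a⟩ ⟨k, c⟩
  simp only [mul_mulSub, Matrix.sub_apply, Matrix.smul_apply, submatrix_apply, divSub, of_apply,
    one_apply, id, Prod.map, Fin.val_succ, Fin.val_castSucc, Prod.mk.injEq, Fin.ext_iff,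
    smul_eq_mul]
  by_cases hac : a = c
  · subst hac
    rcases lt_trichotomy (j : ℕ) k with h | h | h
    · have hk : (k : ℕ) + 1 - j - 1 = (k - j - 1) + 1 := by omega
      simp [h, h.trans k.val.lt_succ_self, h.ne, hk, pow_succ]
      ring
    · simp [h]
    · simp [h.not_gt, h.ne', show ¬ (j : ℕ) < k + 1 by omega]
  · simp [Fin.val_ne_of_ne hac]

theorem Fm_mul_mulSub (lam b : ℂ) : Fm n p lam * mulSub n p b = (lam - b) • truncFm n p lam := by
  ext i ⟨k, c⟩
  simp only [mul_mulSub, Matrix.sub_apply, Matrix.smul_apply, submatrix_apply, Fm, truncFm,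
    of_apply, Prod.map, id, Fin.val_succ, Fin.val_castSucc, smul_eq_mul]
  ring

theorem Ek_zero_eq_submatrix_one :
    Ek n p 0 = (1 : Matrix (Idx n p) (Idx n p) ℂ).submatrix id (Prod.mk 0) := by
  ext ⟨j, a⟩ c
  simp [Ek, one_apply]

theorem Fm_mul_Ek_zero (b : ℂ) : Fm n p b * Ek n p 0 = 1 := by
  ext i c
  simp [Ek_zero_eq_submatrix_one, mul_one_submatrix_id, Fm, one_apply, eq_comm]

theorem divSub_mul_Ek_zero (b : ℂ) : divSub n p b * Ek n p 0 = 0 := by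
  ext ⟨j, a⟩ c
  simp [Ek_zero_eq_submatrix_one, mul_one_submatrix_id, divSub]

theorem mulSub_mul_divSub_add (b : ℂ) :
    mulSub n p b * divSub n p b + Ek n p 0 * Fm n p b = 1 := by
  -- `[divSub; Fm]` is a left inverse of the square matrix `[mulSub | Ek 0]`, hence a right one.
  have e : Idx n p ≃ (Fin n × Fin p) ⊕ Fin p :=
    Fintype.equivOfCardEq (by simp [Fintype.card_sum]; ring)
  rw [← fromCols_mul_fromRows, fromCols_mul_fromRows_eq_one_comm e, fromRows_mul_fromCols,
    divSub_mul_mulSub, divSub_mul_Ek_zero, Fm_mul_mulSub, Fm_mul_Ek_zero, sub_self, zero_smul,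
    fromBlocks_one]

theorem gramMulSub_eq (G : Matrix (Idx n p) (Idx n p) ℂ) (b : ℂ) :
    gramMulSub n p G b =
      G.submatrix (Prod.map Fin.succ id) (Prod.map Fin.succ id)
        - b • G.submatrix (Prod.map Fin.succ id) (Prod.map Fin.castSucc id)
        - conj b • G.submatrix (Prod.map Fin.castSucc id) (Prod.map Fin.succ id)
        + (conj b * b) • G.submatrix (Prod.map Fin.castSucc id) (Prod.map Fin.castSucc id) := by
  rw [gramMulSub, Matrix.mul_assoc, conjTranspose_mulSub_mul, mul_mulSub]
  ext i j
  simp only [Matrix.sub_apply, Matrix.add_apply, Matrix.smul_apply, submatrix_apply, id,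
    smul_eq_mul]
  ring

theorem blockHankel_iff_submatrix_eq (G : Matrix (Idx n p) (Idx n p) ℂ) :
    BlockHankel n p G ↔ G.submatrix (Prod.map Fin.succ id) (Prod.map Fin.castSucc id) =
      G.submatrix (Prod.map Fin.castSucc id) (Prod.map Fin.succ id) := by
  rw [← Matrix.ext_iff]
  exact ⟨fun h ⟨i, a⟩ ⟨j, b⟩ => h i j a b, fun h i j a b => h (i, a) (j, b)⟩

theorem blockHankel_iff_gramMulSub_eq (G : Matrix (Idx n p) (Idx n p) ℂ) {α : ℂ}
    (hα : conj α ≠ α) :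
    BlockHankel n p G ↔ gramMulSub n p G α = gramMulSub n p G (conj α) := by
  have h : gramMulSub n p G α - gramMulSub n p G (conj α) =
      (conj α - α) • (G.submatrix (Prod.map Fin.succ id) (Prod.map Fin.castSucc id) -
        G.submatrix (Prod.map Fin.castSucc id) (Prod.map Fin.succ id)) := by
    rw [gramMulSub_eq, gramMulSub_eq, conj_conj]
    module
  rw [blockHankel_iff_submatrix_eq, ← sub_eq_zero (a := gramMulSub n p G α), h,
    smul_eq_zero_iff_right (sub_ne_zero.mpr hα), sub_eq_zero]

variable {G : Matrix (Idx n p) (Idx n p) ℂ}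

theorem gramMulSub_posDef (hG : G.PosDef) (b : ℂ) : (gramMulSub n p G b).PosDef :=
  hG.conjTranspose_mul_mul_same fun x y hxy => by
    simpa [mulVec_mulVec, divSub_mul_mulSub] using congrArg (divSub n p b *ᵥ ·) hxy

theorem Nm_eq_mulSub_mul_inv_mul (hG : G.PosDef) (b : ℂ) :
    Nm n p G b = mulSub n p b * (gramMulSub n p G b)⁻¹ * (mulSub n p b)ᴴ := by
  have hΔ : (Fm n p b * G⁻¹ * (Fm n p b)ᴴ).PosDef :=
    hG.inv.mul_mul_conjTranspose_same fun x y hxy => by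
      simpa [vecMul_vecMul, Fm_mul_Ek_zero] using congrArg (· ᵥ* Ek n p 0) hxy
  refine inv_sub_eq_mul_inv_mul_conjTranspose (divSub n p b) (Ek n p 0)
    ((isUnit_iff_isUnit_det _).mp hG.isUnit) ((isUnit_iff_isUnit_det _).mp hΔ.isUnit)
    ((isUnit_iff_isUnit_det _).mp (gramMulSub_posDef hG b).isUnit) ?_ (mulSub_mul_divSub_add b)
  rw [Fm_mul_mulSub, sub_self, zero_smul]

theorem Fm_mul_Nm_mul_conjTranspose (hG : G.PosDef) (b lam om : ℂ) :
    Fm n p lam * Nm n p G b * (Fm n p om)ᴴ =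
      ((lam - b) * (conj om - conj b)) •
        (truncFm n p lam * (gramMulSub n p G b)⁻¹ * (truncFm n p om)ᴴ) := by
  have h : Fm n p lam * Nm n p G b * (Fm n p om)ᴴ =
      Fm n p lam * mulSub n p b * (gramMulSub n p G b)⁻¹ * (Fm n p om * mulSub n p b)ᴴ := by
    simp only [Nm_eq_mulSub_mul_inv_mul hG, conjTranspose_mul, Matrix.mul_assoc]
  rw [h, Fm_mul_mulSub, Fm_mul_mulSub, conjTranspose_smul, Matrix.smul_mul, Matrix.smul_mul,
    Matrix.mul_smul, smul_smul, star_sub, Complex.star_def]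

theorem truncFm_mul_mul_conjTranspose_apply (Y : Matrix (Fin n × Fin p) (Fin n × Fin p) ℂ)
    (lam mu : ℂ) (a c : Fin p) :
    (truncFm n p lam * Y * (truncFm n p mu)ᴴ) a c =
      ∑ j : Fin n, (∑ k : Fin n, Y (j, a) (k, c) * conj mu ^ (k : ℕ)) * lam ^ (j : ℕ) := by
  simp [mul_apply, Fintype.sum_prod_type, truncFm, Finset.sum_mul, apply_ite (starRingEnd ℂ),
    mul_ite]
  exact Finset.sum_comm.trans <|
    Finset.sum_congr rfl fun j _ => Finset.sum_congr rfl fun k _ => by ring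

theorem eq_of_truncFm_mul_mul_conjTranspose_eq {s : Set ℂ} (hs : s.Finite)
    {Y Z : Matrix (Fin n × Fin p) (Fin n × Fin p) ℂ}
    (h : ∀ lam ∉ s, ∀ mu ∉ s,
      truncFm n p lam * Y * (truncFm n p mu)ᴴ = truncFm n p lam * Z * (truncFm n p mu)ᴴ) :
    Y = Z := by
  rw [← sub_eq_zero]
  ext ⟨j, a⟩ ⟨k, c⟩
  have hrow : ∀ mu ∉ s, ∑ k : Fin n, (Y - Z) (j, a) (k, c) * conj mu ^ (k : ℕ) = 0 :=
    fun mu hmu => congrFun (eq_zero_of_forall_sum_mul_pow_eq_zero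
      (fun j => ∑ k : Fin n, (Y - Z) (j, a) (k, c) * conj mu ^ (k : ℕ)) hs.infinite_compl
      fun lam hlam => by
        rw [← truncFm_mul_mul_conjTranspose_apply, Matrix.mul_sub, Matrix.sub_mul,
          h lam hlam mu hmu, sub_self, Matrix.zero_apply]) j
  have hconj : (conj ⁻¹' s).Finite := hs.preimage (starRingEnd ℂ).injective.injOn
  exact congrFun (eq_zero_of_forall_sum_mul_pow_eq_zero _ hconj.infinite_compl
    fun z hz => by simpa using hrow (conj z) hz) k

end

theorem stmt6_general (p n : ℕ)
    (G : Matrix (Idx n p) (Idx n p) ℂ) (hG : G.PosDef) (α : ℂ) (hα : α.im ≠ 0) :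
    BlockHankel n p G ↔
      ∀ lam om : ℂ,
        ((lam - conj α) * (conj om - α)) • (Fm n p lam * Nm n p G α * (Fm n p om)ᴴ) =
          ((lam - α) * (conj om - conj α)) • (Fm n p lam * Nm n p G (conj α) * (Fm n p om)ᴴ) := by
  have hα' : conj α ≠ α := mt conj_eq_iff_im.mp hα
  rw [blockHankel_iff_gramMulSub_eq G hα']
  simp only [Fm_mul_Nm_mul_conjTranspose hG, smul_smul, conj_conj]
  have hw : ∀ lam om : ℂ, (lam - conj α) * (conj om - α) * ((lam - α) * (conj om - conj α)) =
      (lam - α) * (conj om - conj α) * ((lam - conj α) * (conj om - α)) :=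
    fun _ _ => mul_comm _ _
  simp only [hw]
  refine ⟨fun h lam om => by rw [h], fun h => ?_⟩
  refine inv_inj (eq_of_truncFm_mul_mul_conjTranspose_eq (s := {α, conj α}) (Set.toFinite _)
    fun lam hlam om hom => smul_right_injective _ ?_ (h lam om))
    ((isUnit_iff_isUnit_det _).mp (gramMulSub_posDef hG α).isUnit)
  simp only [Set.mem_insert_iff, Set.mem_singleton_iff, not_or] at hlam hom
  simp only [ne_eq, mul_eq_zero, sub_eq_zero, hlam, not_or, false_or]
  exact ⟨fun h => hom.1 ((starRingEnd ℂ).injective h), fun h => hom.2 (by rw [← h, conj_conj])⟩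

theorem stmt6 (p n : ℕ) (hp : 0 < p) (hn : 0 < n)
    (G : Matrix (Idx n p) (Idx n p) ℂ) (hG : G.PosDef) (α : ℂ) (hα : α.im ≠ 0) :
    BlockHankel n p G ↔
      ∀ lam om : ℂ,
        ((lam - conj α) * (conj om - α)) • (Fm n p lam * Nm n p G α * (Fm n p om)ᴴ) =
          ((lam - α) * (conj om - conj α)) • (Fm n p lam * Nm n p G (conj α) * (Fm n p om)ᴴ) :=
  stmt6_general p n G hG α hα

end
end

section
/- Let α ∈ ℂ with 0 < |α| < 1 and set α∘ = 1/\bar{α}. Then G is block Toeplitz if and only if for all λ, ω ∈ ℂ one has (1 − λ\bar{α})(1 − α\bar{ω})·F(λ) N_α F(ω)* = (λ − α)(\bar{ω} − \bar{α})·F(λ) N_{α∘} F(ω)*. -/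
open Matrix Complex
open scoped ComplexConjugate ComplexOrder

noncomputable section

/-- `G` is block Toeplitz: `g_{i+1,j+1} = g_{ij}` for `0 ≤ i,j ≤ n−1`. -/
def BlockToeplitz (n p : ℕ) (G : Matrix (Idx n p) (Idx n p) ℂ) : Prop :=
  ∀ (i j : Fin n) (a b : Fin p),
    G (i.succ, a) (j.succ, b) = G (i.castSucc, a) (j.castSucc, b)

/-!
Let `X_β` be the coefficient matrix of multiplication by `λ - β` from matrix polynomials of
degree `< n` to those of degree `≤ n`, so that `F(λ) X_β = (λ - β) F'(λ)`, where `F'` is `F`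
without its last block. The columns of `X_β` and of `G⁻¹ F(β)*` span `ℂ^m`, which gives
`N_β = X_β W_β⁻¹ X_β*` with `W_β = X_β* G X_β`. Both sides of the identity are therefore scalar
multiples of `F'(λ) W⁻¹ F'(ω)*`; cancelling the common scalar, the identity becomes a polynomial
identity in `λ, ω̄` saying `W_α⁻¹ = |α|⁻² W_{1/ᾱ}⁻¹`, i.e. `W_α = |α|² W_{1/ᾱ}`. Entrywise,
`W_α - |α|² W_{1/ᾱ} = (1 - |α|²)(g_{i+1,j+1} - g_{ij})`, and `|α| ≠ 1`.
-/

namespace Matrix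

variable {𝕜 m k q : Type*} [RCLike 𝕜] [Fintype m] [Fintype k] [DecidableEq k] [Fintype q]

theorem mulVec_fromCols_mul_surjective {G : Matrix m m 𝕜} (hG : G.PosDef) {F : Matrix q m 𝕜}
    {X : Matrix m k 𝕜} (hF : Function.Injective Fᴴ.mulVec) (hX : Function.Injective X.mulVec)
    (hFX : F * X = 0) (hcard : Fintype.card k + Fintype.card q = Fintype.card m) :
    Function.Surjective (fromCols (G * X) Fᴴ).mulVec := by
  have hW : Function.Injective (Xᴴ * G * X).mulVec :=
    mulVec_injective_iff_isUnit.mpr (hG.conjTranspose_mul_mul_same hX).isUnit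
  have hXF : Xᴴ * Fᴴ = 0 := by rw [← conjTranspose_mul, hFX, conjTranspose_zero]
  have hinj : Function.Injective (fromCols (G * X) Fᴴ).mulVecLin := by
    refine (injective_iff_map_eq_zero _).mpr fun v hv => ?_
    rw [mulVecLin_apply, fromCols_mulVec] at hv
    have hu : v ∘ Sum.inl = 0 := hW.eq_iff' (mulVec_zero _) |>.mp <| by
      simpa [mulVec_add, mulVec_mulVec, ← Matrix.mul_assoc, hXF] using congrArg (Xᴴ *ᵥ ·) hv
    have hw : v ∘ Sum.inr = 0 := hF.eq_iff' (mulVec_zero _) |>.mp <| by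
      simpa [hu] using hv
    ext (i | i)
    exacts [congrFun hu i, congrFun hw i]
  refine (LinearMap.injective_iff_surjective_of_finrank_eq_finrank ?_).mp hinj
  simp [hcard]

/-- Multiplied by `G` on the right, both sides fix the columns of `X` and kill those of
`G⁻¹ Fᴴ`; by the dimension count these span, since `[G X | Fᴴ]` is injective. -/
theorem PosDef.inv_sub_eq_of_mul_eq_zero [DecidableEq m] [DecidableEq q] {G : Matrix m m 𝕜}
    (hG : G.PosDef) {F : Matrix q m 𝕜} {X : Matrix m k 𝕜} (hF : Function.Injective Fᴴ.mulVec)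
    (hX : Function.Injective X.mulVec)
    (hFX : F * X = 0) (hcard : Fintype.card k + Fintype.card q = Fintype.card m) :
    G⁻¹ - G⁻¹ * Fᴴ * (F * G⁻¹ * Fᴴ)⁻¹ * F * G⁻¹ = X * (Xᴴ * G * X)⁻¹ * Xᴴ := by
  have hG' : IsUnit G.det := (isUnit_iff_isUnit_det G).mp hG.isUnit
  have hW : IsUnit (Xᴴ * (G * X)).det := by
    simpa [Matrix.mul_assoc] using
      (isUnit_iff_isUnit_det _).mp (hG.conjTranspose_mul_mul_same hX).isUnit
  have hD : IsUnit (F * (G⁻¹ * Fᴴ)).det := by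
    simpa [Matrix.mul_assoc] using
      (isUnit_iff_isUnit_det _).mp (hG.inv.conjTranspose_mul_mul_same hF).isUnit
  have hXF : Xᴴ * Fᴴ = 0 := by rw [← conjTranspose_mul, hFX, conjTranspose_zero]
  obtain ⟨B, hB⟩ := mulVec_surjective_iff_exists_right_inverse.mp
    (mulVec_fromCols_mul_surjective hG hF hX hFX hcard)
  rw [← sub_eq_zero]
  set Z := G⁻¹ - G⁻¹ * Fᴴ * (F * G⁻¹ * Fᴴ)⁻¹ * F * G⁻¹ - X * (Xᴴ * G * X)⁻¹ * Xᴴ with hZ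
  have hZGX : Z * (G * X) = 0 := by
    rw [hZ]
    simp only [Matrix.sub_mul, Matrix.mul_assoc, nonsing_inv_mul_cancel_left _ _ hG', hFX,
      nonsing_inv_mul _ hW]
    simp
  have hZF : Z * Fᴴ = 0 := by
    rw [hZ]
    simp only [Matrix.sub_mul, Matrix.mul_assoc, hXF, nonsing_inv_mul _ hD]
    simp
  calc Z = Z * fromCols (G * X) Fᴴ * B := by rw [Matrix.mul_assoc, hB, Matrix.mul_one]
    _ = 0 := by rw [mul_fromCols, hZGX, hZF]; simp

end Matrix

theorem Matrix.eq_smul_iff_inv_eq_smul_inv {K m : Type*} [Field K] [Fintype m] [DecidableEq m]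
    {A B : Matrix m m K} (hA : IsUnit A.det) (hB : IsUnit B.det) {c : K} (hc : c ≠ 0) :
    A = c • B ↔ A⁻¹ = c⁻¹ • B⁻¹ := by
  have hinv : (c • B)⁻¹ = c⁻¹ • B⁻¹ := by
    simpa [Units.smul_def] using Matrix.inv_smul' B (Units.mk0 c hc) hB
  exact ⟨fun h => h ▸ hinv, fun h => Matrix.inv_inj (h.trans hinv.symm) hA⟩

theorem Polynomial.eq_zero_of_forall_sum_mul_pow_eq_zero {R : Type*} [CommRing R] [IsDomain R]
    {N : ℕ} {c : Fin N → R} {S : Set R} (hS : S.Infinite)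
    (h : ∀ x ∈ S, ∑ i, c i * x ^ (i : ℕ) = 0) : c = 0 := by
  set q := (Polynomial.degreeLTEquiv R N).symm c
  have hq : (q : Polynomial R) = 0 :=
    Polynomial.eq_zero_of_infinite_isRoot _ <| hS.mono fun x hx => by
      simpa [Polynomial.IsRoot, Polynomial.eval_eq_sum_degreeLTEquiv q.2, q] using h x hx
  simpa [q] using congrArg (Polynomial.degreeLTEquiv R N) (Subtype.ext hq : q = 0)

section BlockPolynomials

variable {n p : ℕ}

def FmTrunc (n p : ℕ) (lam : ℂ) : Matrix (Fin p) (Fin n × Fin p) ℂ :=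
  Matrix.of fun i jk => lam ^ (jk.1 : ℕ) * (if jk.2 = i then 1 else 0)

def Xm (n p : ℕ) (β : ℂ) : Matrix (Idx n p) (Fin n × Fin p) ℂ :=
  Matrix.of fun ia jb =>
    (if ia = (jb.1.succ, jb.2) then 1 else 0) - (if ia = (jb.1.castSucc, jb.2) then β else 0)

def Wm (n p : ℕ) (G : Matrix (Idx n p) (Idx n p) ℂ) (β : ℂ) :
    Matrix (Fin n × Fin p) (Fin n × Fin p) ℂ :=
  (Xm n p β)ᴴ * G * Xm n p β

theorem FmTrunc_mulVec_apply (lam : ℂ) (v : Fin n × Fin p → ℂ) (a : Fin p) :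
    (FmTrunc n p lam *ᵥ v) a = ∑ j : Fin n, v (j, a) * lam ^ (j : ℕ) := by
  simp [FmTrunc, mulVec, dotProduct, Fintype.sum_prod_type, mul_comm]

theorem eq_zero_of_forall_FmTrunc_mulVec_eq_zero {S : Set ℂ} (hS : S.Infinite)
    {v : Fin n × Fin p → ℂ} (h : ∀ lam ∈ S, FmTrunc n p lam *ᵥ v = 0) : v = 0 := by
  ext ⟨j, a⟩
  refine congrFun (Polynomial.eq_zero_of_forall_sum_mul_pow_eq_zero (c := fun j => v (j, a)) hS
    fun lam hlam => ?_) j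
  simpa [FmTrunc_mulVec_apply] using congrFun (h lam hlam) a

theorem eq_zero_of_forall_FmTrunc_mul_eq_zero {ι : Type*} {S : Set ℂ} (hS : S.Infinite)
    {M : Matrix (Fin n × Fin p) ι ℂ} (h : ∀ lam ∈ S, FmTrunc n p lam * M = 0) : M = 0 := by
  ext x i
  refine congrFun (eq_zero_of_forall_FmTrunc_mulVec_eq_zero (v := fun x => M x i) hS
    fun lam hlam => ?_) x
  ext a
  exact congrFun (congrFun (h lam hlam) a) i

theorem eq_of_forall_FmTrunc_mul_mul_conjTranspose_eq {S : Set ℂ} (hS : S.Infinite)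
    {A B : Matrix (Fin n × Fin p) (Fin n × Fin p) ℂ}
    (h : ∀ lam ∈ S, ∀ om ∈ S,
      FmTrunc n p lam * A * (FmTrunc n p om)ᴴ = FmTrunc n p lam * B * (FmTrunc n p om)ᴴ) :
    A = B := by
  have hcol : ∀ om ∈ S, (A - B) * (FmTrunc n p om)ᴴ = 0 := fun om hom =>
    eq_zero_of_forall_FmTrunc_mul_eq_zero hS fun lam hlam => by
      rw [← Matrix.mul_assoc, Matrix.mul_sub, Matrix.sub_mul, h lam hlam om hom, sub_self]
  have hrow : (A - B)ᴴ = 0 := eq_zero_of_forall_FmTrunc_mul_eq_zero hS fun om hom => by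
    rw [← conjTranspose_conjTranspose (FmTrunc n p om), ← conjTranspose_mul, hcol om hom,
      conjTranspose_zero]
  rwa [conjTranspose_eq_zero, sub_eq_zero] at hrow

theorem mul_Xm_apply {ι : Type*} (β : ℂ) (M : Matrix ι (Idx n p) ℂ) (x : ι)
    (jb : Fin n × Fin p) :
    (M * Xm n p β) x jb = M x (jb.1.succ, jb.2) - M x (jb.1.castSucc, jb.2) * β := by
  simp [Xm, mul_apply, mul_sub, Finset.sum_sub_distrib]

theorem conjTranspose_Xm_mul_apply {ι : Type*} (β : ℂ) (M : Matrix (Idx n p) ι ℂ)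
    (jb : Fin n × Fin p) (y : ι) :
    ((Xm n p β)ᴴ * M) jb y = M (jb.1.succ, jb.2) y - conj β * M (jb.1.castSucc, jb.2) y := by
  simp [Xm, mul_apply, sub_mul, Finset.sum_sub_distrib, apply_ite (star : ℂ → ℂ)]

theorem Fm_mul_Xm (lam β : ℂ) : Fm n p lam * Xm n p β = (lam - β) • FmTrunc n p lam := by
  ext a jb
  rw [mul_Xm_apply]
  simp only [Fm, FmTrunc, of_apply, Matrix.smul_apply, smul_eq_mul, Fin.val_succ,
    Fin.val_castSucc]
  ring

theorem Xm_mulVec_injective (β : ℂ) : Function.Injective (Xm n p β).mulVec := by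
  refine (injective_iff_map_eq_zero (Xm n p β).mulVecLin).mpr fun v hv => ?_
  refine eq_zero_of_forall_FmTrunc_mulVec_eq_zero (Set.finite_singleton β).infinite_compl
    fun lam hlam => ?_
  have hF := congrArg (Fm n p lam *ᵥ ·) hv
  simp only [mulVecLin_apply, mulVec_mulVec, Fm_mul_Xm, smul_mulVec, mulVec_zero] at hF
  exact (smul_eq_zero.mp hF).resolve_left (sub_ne_zero.mpr hlam)

theorem conjTranspose_Fm_mulVec_injective (lam : ℂ) :
    Function.Injective (Fm n p lam)ᴴ.mulVec := fun u w h => by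
  ext a
  simpa [Fm, mulVec, dotProduct, Fintype.sum_prod_type] using congrFun h (0, a)

end BlockPolynomials

section Gram

variable {n p : ℕ} {G : Matrix (Idx n p) (Idx n p) ℂ}

theorem Wm_posDef (hG : G.PosDef) (β : ℂ) : (Wm n p G β).PosDef :=
  hG.conjTranspose_mul_mul_same (Xm_mulVec_injective β)

theorem isUnit_det_Wm (hG : G.PosDef) (β : ℂ) : IsUnit (Wm n p G β).det :=
  (isUnit_iff_isUnit_det _).mp (Wm_posDef hG β).isUnit

theorem Nm_eq (hG : G.PosDef) (β : ℂ) :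
    Nm n p G β = Xm n p β * (Wm n p G β)⁻¹ * (Xm n p β)ᴴ :=
  hG.inv_sub_eq_of_mul_eq_zero (conjTranspose_Fm_mulVec_injective β) (Xm_mulVec_injective β)
    (by rw [Fm_mul_Xm, sub_self, zero_smul])
    (by simp only [Fintype.card_prod, Fintype.card_fin]; ring)

theorem Fm_mul_Nm_mul_conjTranspose_Fm (hG : G.PosDef) (β lam om : ℂ) :
    Fm n p lam * Nm n p G β * (Fm n p om)ᴴ =
      ((lam - β) * conj (om - β)) •
        (FmTrunc n p lam * (Wm n p G β)⁻¹ * (FmTrunc n p om)ᴴ) := by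
  have hassoc : Fm n p lam * (Xm n p β * (Wm n p G β)⁻¹ * (Xm n p β)ᴴ) * (Fm n p om)ᴴ =
      Fm n p lam * Xm n p β * (Wm n p G β)⁻¹ * (Fm n p om * Xm n p β)ᴴ := by
    simp only [conjTranspose_mul, Matrix.mul_assoc]
  rw [Nm_eq hG, hassoc, Fm_mul_Xm, Fm_mul_Xm, conjTranspose_smul, Matrix.mul_smul,
    Matrix.smul_mul, Matrix.smul_mul, smul_smul, Complex.star_def, mul_comm]

theorem Wm_apply (β : ℂ) (i j : Fin n) (a b : Fin p) :
    Wm n p G β (i, a) (j, b) =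
      G (i.succ, a) (j.succ, b) - G (i.succ, a) (j.castSucc, b) * β
        - conj β * G (i.castSucc, a) (j.succ, b)
        + conj β * G (i.castSucc, a) (j.castSucc, b) * β := by
  rw [Wm, mul_Xm_apply, conjTranspose_Xm_mul_apply, conjTranspose_Xm_mul_apply]
  ring

theorem Wm_sub_smul_Wm_apply {α : ℂ} (hα : α ≠ 0) (i j : Fin n) (a b : Fin p) :
    (Wm n p G α - (α * conj α) • Wm n p G (conj α)⁻¹) (i, a) (j, b) =
      (1 - α * conj α) * (G (i.succ, a) (j.succ, b) - G (i.castSucc, a) (j.castSucc, b)) := by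
  have hα' : conj α ≠ 0 := (map_ne_zero _).mpr hα
  rw [Matrix.sub_apply, Matrix.smul_apply, Wm_apply, Wm_apply, map_inv₀, Complex.conj_conj,
    smul_eq_mul]
  field_simp
  ring

theorem blockToeplitz_iff_Wm_eq {α : ℂ} (hα0 : α ≠ 0) (hα1 : ‖α‖ ≠ 1) :
    BlockToeplitz n p G ↔ Wm n p G α = (α * conj α) • Wm n p G (conj α)⁻¹ := by
  have hc : 1 - α * conj α ≠ 0 := by
    rw [Complex.mul_conj', sub_ne_zero, ne_comm]
    exact_mod_cast (pow_eq_one_iff_of_nonneg (norm_nonneg α) two_ne_zero).not.mpr hα1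
  rw [← sub_eq_zero, ← Matrix.ext_iff]
  simp only [Prod.forall, Wm_sub_smul_Wm_apply hα0, Matrix.zero_apply, mul_eq_zero, hc, false_or,
    sub_eq_zero, BlockToeplitz]
  exact ⟨fun h i a j b => h i j a b, fun h i j a b => h i a j b⟩

end Gram

section Identity

variable {n p : ℕ} {G : Matrix (Idx n p) (Idx n p) ℂ} {α : ℂ}

def identityCoeff (α lam om : ℂ) : ℂ :=
  (1 - lam * conj α) * (1 - α * conj om) * ((lam - α) * conj (om - α))

theorem smul_Fm_mul_Nm_eq_smul_iff (hG : G.PosDef) (hα : α ≠ 0) (lam om : ℂ) :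
    ((1 - lam * conj α) * (1 - α * conj om)) • (Fm n p lam * Nm n p G α * (Fm n p om)ᴴ) =
        ((lam - α) * (conj om - conj α)) •
          (Fm n p lam * Nm n p G (conj α)⁻¹ * (Fm n p om)ᴴ) ↔
      identityCoeff α lam om • (FmTrunc n p lam * (Wm n p G α)⁻¹ * (FmTrunc n p om)ᴴ) =
        identityCoeff α lam om •
          (FmTrunc n p lam * ((α * conj α)⁻¹ • (Wm n p G (conj α)⁻¹)⁻¹) * (FmTrunc n p om)ᴴ) := by
  have hα' : conj α ≠ 0 := (map_ne_zero _).mpr hα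
  have hcoef : (lam - α) * (conj om - conj α) * ((lam - (conj α)⁻¹) * conj (om - (conj α)⁻¹)) =
      identityCoeff α lam om * (α * conj α)⁻¹ := by
    simp only [identityCoeff, map_sub, map_inv₀, Complex.conj_conj]
    field_simp
    ring
  rw [Fm_mul_Nm_mul_conjTranspose_Fm hG, Fm_mul_Nm_mul_conjTranspose_Fm hG]
  simp only [smul_smul]
  rw [hcoef, Matrix.mul_smul, Matrix.smul_mul, smul_smul, identityCoeff]

theorem identityCoeff_ne_zero {lam om : ℂ} (hlam : lam ∉ ({α, (conj α)⁻¹} : Set ℂ))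
    (hom : om ∉ ({α, (conj α)⁻¹} : Set ℂ)) : identityCoeff α lam om ≠ 0 := by
  simp only [Set.mem_insert_iff, Set.mem_singleton_iff, not_or] at hlam hom
  refine mul_ne_zero (mul_ne_zero ?_ ?_) (mul_ne_zero (sub_ne_zero.mpr hlam.1) ?_)
  · exact fun h => hlam.2 (eq_inv_of_mul_eq_one_left (sub_eq_zero.mp h).symm)
  · exact fun h => hom.2 (eq_inv_of_mul_eq_one_right
      (by simpa using (congrArg conj (sub_eq_zero.mp h)).symm))
  · exact (map_ne_zero _).mpr (sub_ne_zero.mpr hom.1)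

end Identity

theorem stmt8_general (p n : ℕ)
    (G : Matrix (Idx n p) (Idx n p) ℂ) (hG : G.PosDef) (α : ℂ)
    (hα0 : α ≠ 0) (hα1 : ‖α‖ < 1) :
    BlockToeplitz n p G ↔
      ∀ lam om : ℂ,
        ((1 - lam * conj α) * (1 - α * conj om)) • (Fm n p lam * Nm n p G α * (Fm n p om)ᴴ) =
          ((lam - α) * (conj om - conj α)) •
            (Fm n p lam * Nm n p G (conj α)⁻¹ * (Fm n p om)ᴴ) := by
  have hc : α * conj α ≠ 0 := mul_ne_zero hα0 ((map_ne_zero _).mpr hα0)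
  simp_rw [smul_Fm_mul_Nm_eq_smul_iff hG hα0, blockToeplitz_iff_Wm_eq hα0 hα1.ne,
    Matrix.eq_smul_iff_inv_eq_smul_inv (isUnit_det_Wm hG α) (isUnit_det_Wm hG _) hc]
  refine ⟨fun h lam om => by rw [h], fun h => ?_⟩
  refine eq_of_forall_FmTrunc_mul_mul_conjTranspose_eq
    (Set.toFinite {α, (conj α)⁻¹}).infinite_compl
    fun lam hlam om hom => smul_right_injective _ (identityCoeff_ne_zero hlam hom) (h lam om)

theorem stmt8 (p n : ℕ) (hp : 0 < p) (hn : 0 < n)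
    (G : Matrix (Idx n p) (Idx n p) ℂ) (hG : G.PosDef) (α : ℂ)
    (hα0 : α ≠ 0) (hα1 : ‖α‖ < 1) :
    BlockToeplitz n p G ↔
      ∀ lam om : ℂ,
        ((1 - lam * conj α) * (1 - α * conj om)) • (Fm n p lam * Nm n p G α * (Fm n p om)ᴴ) =
          ((lam - α) * (conj om - conj α)) •
            (Fm n p lam * Nm n p G (conj α)⁻¹ * (Fm n p om)ᴴ) :=
  stmt8_general p n G hG α hα0 hα1

end
end

section
/- (Gohberg–Heinig formula.) If G is block Toeplitz, then Γ = Σ_{j=0}^{n} A^j ( Γe_n(e_n*Γe_n)^{-1}e_n*Γ − A·Γe₀(e₀*Γe₀)^{-1}e₀*Γ·A* ) (A*)^j. -/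
open Matrix Complex
open scoped ComplexConjugate ComplexOrder

noncomputable section

/-!
Write `Γ = G⁻¹`, `P = Γ eₙ (eₙ* Γ eₙ)⁻¹ eₙ* Γ` and `Q = Γ e₀ (e₀* Γ e₀)⁻¹ e₀* Γ`. The shift
satisfies `A A* = 1 - eₙ eₙ*`, and `G` being block Toeplitz means
`(1 - eₙ eₙ*) G A = A G (1 - e₀ e₀*)`. From these, `Z = (Γ - P) - A (Γ - Q) A*` satisfies
`eₙ* Z = 0` while `G Z` lies in the range of `eₙ`; as `eₙ* Γ eₙ` is invertible this forces
`Z = 0`, i.e. `Γ - A Γ A* = P - A Q A*`. Since `A` is nilpotent, this Stein equation is solved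
by the telescoping sum `Σ Aʲ (Γ - A Γ A*) (A*)ʲ = Γ`.
-/
theorem sum_range_pow_mul_sub_mul_mul_pow {R : Type*} [Ring R] {A : R} {N : ℕ}
    (hA : A ^ N = 0) (X B : R) :
    ∑ j ∈ Finset.range N, A ^ j * (X - A * X * B) * B ^ j = X := by
  have telescope (j : ℕ) : A ^ j * (X - A * X * B) * B ^ j =
      A ^ j * X * B ^ j - A ^ (j + 1) * X * B ^ (j + 1) := by
    rw [pow_succ, pow_succ']; noncomm_ring
  rw [Finset.sum_congr rfl fun j _ => telescope j, Finset.sum_range_sub']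
  simp [hA]

namespace Matrix

variable {R ι κ κ' : Type*} [CommRing R] [Star R] [Fintype ι] [Fintype κ] [DecidableEq κ]
  [Fintype κ'] [DecidableEq κ']

lemma conjTranspose_mul_sub_mul_inv_mul_eq_zero (Γ : Matrix ι ι R) (E : Matrix ι κ R)
    (hc : IsUnit (Eᴴ * Γ * E).det) :
    Eᴴ * (Γ - Γ * E * (Eᴴ * Γ * E)⁻¹ * Eᴴ * Γ) = 0 := by
  simp only [Matrix.mul_sub, ← Matrix.mul_assoc, mul_nonsing_inv _ hc, Matrix.one_mul,
    sub_self]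

variable [DecidableEq ι]

lemma eq_zero_of_conjTranspose_mul_eq_zero {G Z : Matrix ι ι R} {E : Matrix ι κ R}
    (hG : IsUnit G.det) (hc : IsUnit (Eᴴ * G⁻¹ * E).det)
    (hEZ : Eᴴ * Z = 0) (hGZ : (1 - E * Eᴴ) * (G * Z) = 0) : Z = 0 := by
  have hZ : Z = G⁻¹ * E * (Eᴴ * (G * Z)) := by
    rw [Matrix.sub_mul, Matrix.one_mul, sub_eq_zero] at hGZ
    rw [Matrix.mul_assoc, ← Matrix.mul_assoc E, ← hGZ, ← Matrix.mul_assoc,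
      nonsing_inv_mul _ hG, Matrix.one_mul]
  have hcoef : Eᴴ * (G * Z) = 0 := by
    have h : Eᴴ * G⁻¹ * E * (Eᴴ * (G * Z)) = 0 := by
      rw [← hEZ]
      conv_rhs => rw [hZ]
      simp only [Matrix.mul_assoc]
    simpa [← Matrix.mul_assoc, nonsing_inv_mul _ hc] using congrArg ((Eᴴ * G⁻¹ * E)⁻¹ * ·) h
  rw [hZ, hcoef, Matrix.mul_zero]

theorem inv_sub_mul_inv_mul_conjTranspose_eq {G A : Matrix ι ι R} {E : Matrix ι κ R}
    {E' : Matrix ι κ' R} (hG : IsUnit G.det) (hc : IsUnit (Eᴴ * G⁻¹ * E).det)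
    (hc' : IsUnit (E'ᴴ * G⁻¹ * E').det) (hE : Eᴴ * E = 1) (hEA : Eᴴ * A = 0)
    (hAE' : A * E' = 0) (hAA : A * Aᴴ = 1 - E * Eᴴ)
    (hGA : (1 - E * Eᴴ) * (G * A) = A * G * (1 - E' * E'ᴴ)) :
    G⁻¹ - A * G⁻¹ * Aᴴ =
      G⁻¹ * E * (Eᴴ * G⁻¹ * E)⁻¹ * Eᴴ * G⁻¹ -
        A * (G⁻¹ * E' * (E'ᴴ * G⁻¹ * E')⁻¹ * E'ᴴ * G⁻¹) * Aᴴ := by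
  set Γ := G⁻¹
  have hGΓ : G * Γ = 1 := mul_nonsing_inv G hG
  set X := Γ - Γ * E * (Eᴴ * Γ * E)⁻¹ * Eᴴ * Γ with hX
  set Y := Γ - Γ * E' * (E'ᴴ * Γ * E')⁻¹ * E'ᴴ * Γ with hY
  have hGX : G * X = 1 - E * ((Eᴴ * Γ * E)⁻¹ * Eᴴ * Γ) := by
    simp only [hX, Matrix.mul_sub, ← Matrix.mul_assoc, hGΓ, Matrix.one_mul]
  have hGY : G * Y = 1 - E' * ((E'ᴴ * Γ * E')⁻¹ * E'ᴴ * Γ) := by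
    simp only [hY, Matrix.mul_sub, ← Matrix.mul_assoc, hGΓ, Matrix.one_mul]
  have hPGX : (1 - E * Eᴴ) * (G * X) = 1 - E * Eᴴ := by
    rw [hGX, Matrix.mul_sub, Matrix.mul_one, sub_eq_self, Matrix.sub_mul, Matrix.one_mul]
    simp only [Matrix.mul_assoc, ← Matrix.mul_assoc Eᴴ E, hE, Matrix.one_mul, sub_self]
  have hPGAYA : (1 - E * Eᴴ) * (G * (A * Y * Aᴴ)) = 1 - E * Eᴴ := by
    have hP'Y : (1 - E' * E'ᴴ) * Y = Y := by
      rw [Matrix.sub_mul, Matrix.one_mul, Matrix.mul_assoc,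
        conjTranspose_mul_sub_mul_inv_mul_eq_zero Γ E' hc', Matrix.mul_zero, sub_zero]
    calc (1 - E * Eᴴ) * (G * (A * Y * Aᴴ))
        = ((1 - E * Eᴴ) * (G * A)) * Y * Aᴴ := by simp only [Matrix.mul_assoc]
      _ = A * (G * Y) * Aᴴ := by
          rw [hGA, Matrix.mul_assoc (A * G), hP'Y, Matrix.mul_assoc A]
      _ = 1 - E * Eᴴ := by
          rw [hGY, Matrix.mul_sub, Matrix.mul_one, ← Matrix.mul_assoc A E', hAE',
            Matrix.zero_mul, sub_zero, hAA]
  have hZ : X - A * Y * Aᴴ = 0 := by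
    refine eq_zero_of_conjTranspose_mul_eq_zero hG hc ?_ ?_
    · rw [Matrix.mul_sub, conjTranspose_mul_sub_mul_inv_mul_eq_zero Γ E hc, zero_sub,
        neg_eq_zero, ← Matrix.mul_assoc, ← Matrix.mul_assoc, hEA, Matrix.zero_mul,
        Matrix.zero_mul]
    · rw [Matrix.mul_sub, Matrix.mul_sub, hPGX, hPGAYA, sub_self]
  rw [hX, hY] at hZ
  rw [← sub_eq_zero, ← hZ]
  simp only [Matrix.mul_sub, Matrix.sub_mul]
  abel

end Matrix

section

variable {n p : ℕ}

lemma Am_mul_apply_castSucc {C : Type*} (M : Matrix (Idx n p) C ℂ) (i : Fin n) (a : Fin p)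
    (y : C) : (Am n p * M) (i.castSucc, a) y = M (i.succ, a) y := by
  simp [Am, mul_apply, Fintype.sum_prod_type, Fin.sum_univ_succ, Fin.val_inj, ite_and]

lemma Am_mul_apply_last {C : Type*} (M : Matrix (Idx n p) C ℂ) (a : Fin p) (y : C) :
    (Am n p * M) (Fin.last n, a) y = 0 := by
  simp [Am, mul_apply, Fintype.sum_prod_type, Fin.sum_univ_succ, ite_and,
    fun i : Fin n => i.isLt.ne]

lemma mul_Am_apply_succ {R : Type*} (M : Matrix R (Idx n p) ℂ) (x : R) (i : Fin n)
    (b : Fin p) : (M * Am n p) x (i.succ, b) = M x (i.castSucc, b) := by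
  simp [Am, mul_apply, Fintype.sum_prod_type, Fin.sum_univ_castSucc, Fin.val_inj, ite_and,
    fun i : Fin n => i.isLt.ne]

lemma mul_Am_apply_zero {R : Type*} (M : Matrix R (Idx n p) ℂ) (x : R) (b : Fin p) :
    (M * Am n p) x (0, b) = 0 := by
  simp [Am, mul_apply]

lemma conjTranspose_Ek_mul_apply {C : Type*} (k : Fin (n + 1)) (M : Matrix (Idx n p) C ℂ)
    (a : Fin p) (y : C) : ((Ek n p k)ᴴ * M) a y = M (k, a) y := by
  simp [Ek, mul_apply, Fintype.sum_prod_type, ite_and, apply_ite (starRingEnd ℂ)]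

lemma one_sub_Ek_mul_conjTranspose_mul_apply {C : Type*} (k : Fin (n + 1))
    (M : Matrix (Idx n p) C ℂ) (x : Idx n p) (y : C) :
    ((1 - Ek n p k * (Ek n p k)ᴴ : Matrix (Idx n p) (Idx n p) ℂ) * M) x y =
      if x.1 = k then 0 else M x y := by
  obtain ⟨i, a⟩ := x
  rw [Matrix.sub_mul, Matrix.one_mul, Matrix.mul_assoc, Matrix.sub_apply, mul_apply]
  simp only [conjTranspose_Ek_mul_apply]
  split_ifs with h
  · subst h; simp [Ek]
  · simp [Ek, h]

lemma mul_one_sub_Ek_mul_conjTranspose_apply {R : Type*} (k : Fin (n + 1))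
    (M : Matrix R (Idx n p) ℂ) (x : R) (y : Idx n p) :
    (M * (1 - Ek n p k * (Ek n p k)ᴴ : Matrix (Idx n p) (Idx n p) ℂ)) x y =
      if y.1 = k then 0 else M x y := by
  obtain ⟨j, b⟩ := y
  rw [Matrix.mul_sub, Matrix.mul_one, ← Matrix.mul_assoc, Matrix.sub_apply, mul_apply]
  split_ifs with h
  · subst h; simp [Ek, mul_apply, Fintype.sum_prod_type, ite_and, apply_ite (starRingEnd ℂ)]
  · simp [Ek, h]

lemma conjTranspose_Ek_mul_Ek (k : Fin (n + 1)) : (Ek n p k)ᴴ * Ek n p k = 1 := by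
  ext a b
  rw [conjTranspose_Ek_mul_apply]
  simp [Ek, one_apply, eq_comm]

lemma Am_mul_Ek_zero : Am n p * Ek n p 0 = 0 := by
  ext ⟨i, a⟩ b
  induction i using Fin.lastCases with
  | last => exact Am_mul_apply_last _ a b
  | cast i => simp [Am_mul_apply_castSucc, Ek, Fin.succ_ne_zero]

lemma conjTranspose_Ek_last_mul_Am : (Ek n p (Fin.last n))ᴴ * Am n p = 0 := by
  ext a ⟨j, b⟩
  induction j using Fin.cases with
  | zero => exact mul_Am_apply_zero _ a b
  | succ j => simp [mul_Am_apply_succ, Ek, (Fin.castSucc_lt_last j).ne]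

lemma Am_mul_conjTranspose_Am :
    Am n p * (Am n p)ᴴ = 1 - Ek n p (Fin.last n) * (Ek n p (Fin.last n))ᴴ := by
  ext ⟨i, a⟩ y
  rw [← Matrix.mul_one (1 - _), one_sub_Ek_mul_conjTranspose_mul_apply]
  induction i using Fin.lastCases with
  | last => simp [Am_mul_apply_last]
  | cast i =>
    rw [Am_mul_apply_castSucc]
    simp [(Fin.castSucc_lt_last i).ne, Am, one_apply, Prod.ext_iff, Fin.ext_iff, eq_comm]

lemma Am_pow_apply_eq_zero {k : ℕ} {x : Idx n p} (hx : n < x.1 + k) (y : Idx n p) :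
    (Am n p ^ k) x y = 0 := by
  induction k generalizing x with
  | zero => exact absurd hx (not_lt.2 (Nat.lt_succ_iff.1 x.1.isLt))
  | succ k ih =>
    obtain ⟨i, a⟩ := x
    rw [pow_succ']
    induction i using Fin.lastCases with
    | last => exact Am_mul_apply_last _ a y
    | cast i =>
      rw [Am_mul_apply_castSucc]
      exact ih (by simp at hx ⊢; omega)

lemma Am_pow_eq_zero : Am n p ^ (n + 1) = 0 := by
  ext x y
  exact Am_pow_apply_eq_zero (by omega) y

lemma BlockToeplitz.one_sub_Ek_last_mul_mul_Am {G : Matrix (Idx n p) (Idx n p) ℂ}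
    (hT : BlockToeplitz n p G) :
    (1 - Ek n p (Fin.last n) * (Ek n p (Fin.last n))ᴴ) * (G * Am n p) =
      Am n p * G * (1 - Ek n p 0 * (Ek n p 0)ᴴ) := by
  ext ⟨i, a⟩ ⟨j, b⟩
  rw [one_sub_Ek_mul_conjTranspose_mul_apply, mul_one_sub_Ek_mul_conjTranspose_apply]
  induction i using Fin.lastCases with
  | last => simp [Am_mul_apply_last]
  | cast i =>
    induction j using Fin.cases with
    | zero => simp [mul_Am_apply_zero]
    | succ j =>
      simp [(Fin.castSucc_lt_last i).ne, Fin.succ_ne_zero, mul_Am_apply_succ,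
        Am_mul_apply_castSucc, hT i j a b]

lemma Matrix.PosDef.conjTranspose_Ek_mul_mul_Ek {Γ : Matrix (Idx n p) (Idx n p) ℂ}
    (hΓ : Γ.PosDef) (k : Fin (n + 1)) : ((Ek n p k)ᴴ * Γ * Ek n p k).PosDef :=
  hΓ.conjTranspose_mul_mul_same <| Function.LeftInverse.injective (g := ((Ek n p k)ᴴ *ᵥ ·))
    fun x => by simp only [mulVec_mulVec, conjTranspose_Ek_mul_Ek, one_mulVec]

end

theorem stmt10_general (p n : ℕ)
    (G : Matrix (Idx n p) (Idx n p) ℂ) (hG : G.PosDef) (hT : BlockToeplitz n p G) :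
    G⁻¹ = ∑ j ∈ Finset.range (n + 1),
      Am n p ^ j *
        (G⁻¹ * Ek n p (Fin.last n) * ((Ek n p (Fin.last n))ᴴ * G⁻¹ * Ek n p (Fin.last n))⁻¹ *
            (Ek n p (Fin.last n))ᴴ * G⁻¹ -
          Am n p * (G⁻¹ * Ek n p 0 * ((Ek n p 0)ᴴ * G⁻¹ * Ek n p 0)⁻¹ * (Ek n p 0)ᴴ * G⁻¹) *
            (Am n p)ᴴ) *
        ((Am n p)ᴴ) ^ j := by
  have hc (k : Fin (n + 1)) : IsUnit ((Ek n p k)ᴴ * G⁻¹ * Ek n p k).det :=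
    (isUnit_iff_isUnit_det _).mp (hG.inv.conjTranspose_Ek_mul_mul_Ek k).isUnit
  rw [← inv_sub_mul_inv_mul_conjTranspose_eq ((isUnit_iff_isUnit_det G).mp hG.isUnit)
    (hc (Fin.last n)) (hc 0) (conjTranspose_Ek_mul_Ek _) conjTranspose_Ek_last_mul_Am
    Am_mul_Ek_zero Am_mul_conjTranspose_Am hT.one_sub_Ek_last_mul_mul_Am,
    sum_range_pow_mul_sub_mul_mul_pow Am_pow_eq_zero]

theorem stmt10 (p n : ℕ) (hp : 0 < p) (hn : 0 < n)
    (G : Matrix (Idx n p) (Idx n p) ℂ) (hG : G.PosDef) (hT : BlockToeplitz n p G) :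
    G⁻¹ = ∑ j ∈ Finset.range (n + 1),
      Am n p ^ j *
        (G⁻¹ * Ek n p (Fin.last n) * ((Ek n p (Fin.last n))ᴴ * G⁻¹ * Ek n p (Fin.last n))⁻¹ *
            (Ek n p (Fin.last n))ᴴ * G⁻¹ -
          Am n p * (G⁻¹ * Ek n p 0 * ((Ek n p 0)ᴴ * G⁻¹ * Ek n p 0)⁻¹ * (Ek n p 0)ᴴ * G⁻¹) *
            (Am n p)ᴴ) *
        ((Am n p)ᴴ) ^ j :=
  stmt10_general p n G hG hT

end
end
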